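/- arXiv:1006.5156 — 2 statements merged into one kernel-verified Lean document; each statement's English description precedes it below -/
import Mathlib

section
/- Let C ⊂ C' ⊂ ℝ^r be an inclusion of finite rational cones, Λ' = C' ∩ ℤ^r, Λ = C ∩ ℤ^r. Let R' = ⊕_{λ∈Λ'} R'_λ be a Λ'-graded ℂ-algebra and set R = ⊕_{λ∈Λ} R'_λ. If R' is finitely generated as a ℂ-algebra, then so is R. -/
/-!
Choose homogeneous generators `y₁, …, yₛ` of `R'`, of degrees `μ₁, …, μₛ`. Then `R` is generated
by the monomials `yᵃ` whose degree `∑ aᵢ μᵢ` lies in `Λ = C ∩ ℤ^r`, so it is enough that the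
monoid `{a ∈ ℕˢ | ∑ aᵢ μᵢ ∈ Λ}` is finitely generated.
By Gordan's lemma `Λ` is generated by its points in a bounded box: after scaling the generators
`wₖ` of `C` to be integral, any `λ = ∑ cₖ wₖ ∈ Λ` is `∑ ⌊cₖ⌋ wₖ` plus a lattice point of
`∑ₖ [0, 1) wₖ`. The preimage of the finitely generated monoid `Λ` under `a ↦ ∑ aᵢ μᵢ` is then
the projection of the solution monoid of a linear equation over `ℕ`, which is finitely generated
by Dickson's lemma.
-/

open PointedCone Set

theorem PointedCone.coe_hull_range {R E ι : Type*} [Semiring R] [PartialOrder R]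
    [IsOrderedRing R] [AddCommMonoid E] [Module R E] [Fintype ι] (v : ι → E) :
    (hull R (range v) : Set E) = {x | ∃ c : ι → R, (∀ i, 0 ≤ c i) ∧ x = ∑ i, c i • v i} := by
  ext x
  simp only [SetLike.mem_coe, Submodule.mem_span_range_iff_exists_fun, mem_ofPred_eq]
  constructor
  · rintro ⟨c, rfl⟩
    exact ⟨fun i => c i, fun i => (c i).2, rfl⟩
  · rintro ⟨c, hc, rfl⟩
    exact ⟨fun i => ⟨c i, hc i⟩, rfl⟩

theorem exists_pos_nat_forall_mul_eq_int {α : Type*} [Fintype α] (q : α → ℚ) :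
    ∃ D : ℕ, 0 < D ∧ ∀ a, ∃ n : ℤ, (n : ℚ) = D * q a := by
  refine ⟨∏ a, (q a).den, Finset.prod_pos fun a _ => (q a).pos, fun a => ?_⟩
  obtain ⟨e, he⟩ := Finset.dvd_prod_of_mem (fun a => (q a).den) (Finset.mem_univ a)
  refine ⟨(q a).num * e, ?_⟩
  rw [Int.cast_mul, ← Rat.mul_den_eq_num, he]
  push_cast
  ring

variable {ι κ : Type*} [Fintype ι]

theorem exists_int_hull_eq_rat_hull [Fintype κ] (v : ι → κ → ℚ) :
    ∃ w : ι → κ → ℤ, hull ℝ (range fun i j => (v i j : ℝ)) =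
      hull ℝ (range fun i j => (w i j : ℝ)) := by
  obtain ⟨D, hD, hn⟩ := exists_pos_nat_forall_mul_eq_int fun p : ι × κ => v p.1 p.2
  choose w hw using hn
  have hwv : ∀ i, (fun j => (w (i, j) : ℝ)) = (D : ℝ) • fun j => (v i j : ℝ) := fun i => by
    funext j
    simp only [Pi.smul_apply, smul_eq_mul]
    exact_mod_cast hw (i, j)
  refine ⟨fun i j => w (i, j), le_antisymm ?_ ?_⟩ <;> rw [Submodule.span_le] <;>
    rintro _ ⟨i, rfl⟩ <;> dsimp only
  · have hD' : (D : ℝ) ≠ 0 := by positivity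
    rw [show (fun j => (v i j : ℝ)) = (D : ℝ)⁻¹ • fun j => (w (i, j) : ℝ) by
      rw [hwv, inv_smul_smul₀ hD']]
    exact PointedCone.smul_mem _ (by positivity) (Submodule.subset_span ⟨i, rfl⟩)
  · simp only [hwv]
    exact PointedCone.smul_mem _ (by positivity) (Submodule.subset_span ⟨i, rfl⟩)

def latticePoints (K : PointedCone ℝ (κ → ℝ)) : AddSubmonoid (κ → ℤ) :=
  K.toAddSubmonoid.comap ((Int.castAddHom ℝ).compLeft κ)

theorem mem_latticePoints {K : PointedCone ℝ (κ → ℝ)} {z : κ → ℤ} :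
    z ∈ latticePoints K ↔ (fun j => (z j : ℝ)) ∈ K := Iff.rfl

theorem abs_le_sum_abs_of_cast_eq_sum_smul {w : ι → κ → ℤ} {t : ι → ℝ} (ht : ∀ i, |t i| ≤ 1)
    {z : κ → ℤ} (hz : (fun j => (z j : ℝ)) = ∑ i, t i • fun j => (w i j : ℝ)) :
    |z| ≤ ∑ i, |w i| := fun j => by
  simp only [Pi.abs_apply, Finset.sum_apply]
  suffices h : |(z j : ℝ)| ≤ ∑ i, |(w i j : ℝ)| by exact_mod_cast h
  rw [congrFun hz j]
  simp only [Finset.sum_apply, Pi.smul_apply, smul_eq_mul]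
  refine (Finset.abs_sum_le_sum_abs _ _).trans (Finset.sum_le_sum fun i _ => ?_)
  rw [abs_mul]
  exact mul_le_of_le_one_left (abs_nonneg _) (ht i)

theorem latticePoints_hull_int_fg [Fintype κ] (w : ι → κ → ℤ) :
    (latticePoints (hull ℝ (range fun i j => (w i j : ℝ)))).FG := by
  classical
  set P := latticePoints (hull ℝ (range fun i j => (w i j : ℝ)))
  set B : κ → ℤ := ∑ i, |w i|
  set S := (Finset.Icc (-B) B).filter (· ∈ P)
  have hS : ∀ z ∈ P, |z| ≤ B → z ∈ S := fun z hzP hzB => Finset.mem_filter.2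
    ⟨Finset.mem_Icc.2 ⟨(neg_le_neg hzB).trans (neg_le.1 (neg_le_abs z)),
      (le_abs_self z).trans hzB⟩, hzP⟩
  have hgen : ∀ i, w i ∈ S := fun i => hS _ (Submodule.subset_span ⟨i, rfl⟩)
    (Finset.single_le_sum (f := fun i => |w i|) (fun _ _ => abs_nonneg _) (Finset.mem_univ i))
  refine ⟨S, le_antisymm (AddSubmonoid.closure_le.2 fun z hz => (Finset.mem_filter.1 hz).2)
    fun z hz => ?_⟩
  rw [mem_latticePoints, ← SetLike.mem_coe, coe_hull_range] at hz
  obtain ⟨c, hc, hcz⟩ := hz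
  set z' := z - ∑ i, ⌊c i⌋₊ • w i
  have hz' : (fun j => (z' j : ℝ)) = ∑ i, (c i - ⌊c i⌋₊) • fun j => (w i j : ℝ) := by
    funext j
    have hcj := congrFun hcz j
    simp only [Finset.sum_apply, Pi.smul_apply, smul_eq_mul] at hcj ⊢
    simp only [z', Pi.sub_apply, Finset.sum_apply, Pi.smul_apply, sub_mul,
      Finset.sum_sub_distrib, ← hcj]
    push_cast [nsmul_eq_mul]
    rfl
  have hfract₀ : ∀ i, 0 ≤ c i - ⌊c i⌋₊ := fun i => sub_nonneg.2 (Nat.floor_le (hc i))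
  have hfract₁ : ∀ i, |c i - ⌊c i⌋₊| ≤ 1 := fun i => abs_le.2
    ⟨by linarith [hfract₀ i], by linarith [Nat.lt_floor_add_one (c i)]⟩
  have hz'S : z' ∈ S := by
    refine hS _ ?_ (abs_le_sum_abs_of_cast_eq_sum_smul hfract₁ hz')
    rw [mem_latticePoints, hz']
    exact Submodule.sum_mem _ fun i _ =>
      PointedCone.smul_mem _ (hfract₀ i) (Submodule.subset_span ⟨i, rfl⟩)
  rw [← add_sub_cancel (∑ i, ⌊c i⌋₊ • w i) z]
  exact add_mem (sum_mem fun i _ => AddSubmonoid.nsmul_mem _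
    (AddSubmonoid.subset_closure (hgen i)) _) (AddSubmonoid.subset_closure hz'S)

theorem latticePoints_hull_rat_fg [Fintype κ] (v : ι → κ → ℚ) :
    (latticePoints (hull ℝ (range fun i j => (v i j : ℝ)))).FG := by
  obtain ⟨w, hw⟩ := exists_int_hull_eq_rat_hull v
  rw [hw]
  exact latticePoints_hull_int_fg w

theorem AddSubmonoid.FG.comap_of_wellQuasiOrderedLE {M G : Type*} [AddCommMonoid M]
    [PartialOrder M] [WellQuasiOrderedLE M] [IsOrderedCancelAddMonoid M]
    [CanonicallyOrderedAdd M] [AddCommMonoid G] [IsCancelAdd G] {Λ : AddSubmonoid G}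
    (hΛ : Λ.FG) (L : M →+ G) : (Λ.comap L).FG := by
  obtain ⟨S, rfl⟩ := hΛ
  let g : (S → ℕ) →+ G := (Fintype.linearCombination ℕ ((↑) : S → G)).toAddMonoidHom
  have hg : AddMonoidHom.mrange g = AddSubmonoid.closure S := by
    rw [← Submodule.span_nat_eq_addSubmonoidClosure, ← Subtype.range_coe (s := (S : Set G)),
      ← Fintype.range_linearCombination]
    rfl
  have hcomap : (AddSubmonoid.closure (S : Set G)).comap L =
      ((L.comp (AddMonoidHom.fst _ _)).eqLocusM (g.comp (AddMonoidHom.snd _ _))).map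
        (AddMonoidHom.fst _ _) := by
    ext x
    simp [← hg, eq_comm]
  rw [hcomap]
  exact (AddSubmonoid.fg_eqLocusM _ _).map _

section Graded

variable {R A ι τ : Type*} [CommSemiring R] [CommSemiring A] [Algebra R A]
  [DecidableEq ι] [AddCommMonoid ι] (ℳ : ι → Submodule R A) [GradedRing ℳ]

theorem exists_finset_homogeneous_adjoin_eq_top (hfg : (⊤ : Subalgebra R A).FG) :
    ∃ s : Finset A, Algebra.adjoin R (s : Set A) = ⊤ ∧ ∀ a ∈ s, SetLike.IsHomogeneousElem ℳ a := by
  classical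
  obtain ⟨F, hF⟩ := hfg
  refine ⟨F.biUnion fun x => (DirectSum.decompose ℳ x).support.image
      fun d => (DirectSum.decompose ℳ x d : A), ?_, ?_⟩
  · rw [← top_le_iff, ← hF, Algebra.adjoin_le_iff]
    intro x hx
    rw [← DirectSum.sum_support_decompose ℳ x]
    exact sum_mem fun d hd => Algebra.subset_adjoin
      (by simpa using ⟨x, hx, d, by simpa using hd, rfl⟩)
  · simp only [Finset.mem_biUnion, Finset.mem_image]
    rintro _ ⟨x, -, d, -, rfl⟩
    exact ⟨d, (DirectSum.decompose ℳ x d).2⟩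

variable [Fintype τ] (y : τ → A)

theorem adjoin_monomials_closure (F : Set (τ → ℕ)) :
    Algebra.adjoin R ((fun a : τ → ℕ => ∏ i, y i ^ a i) '' AddSubmonoid.closure F) =
      Algebra.adjoin R ((fun a : τ → ℕ => ∏ i, y i ^ a i) '' F) := by
  refine le_antisymm (Algebra.adjoin_le ?_)
    (Algebra.adjoin_mono (image_mono AddSubmonoid.subset_closure))
  rintro _ ⟨a, ha, rfl⟩
  induction ha using AddSubmonoid.closure_induction with
  | mem a ha => exact Algebra.subset_adjoin (mem_image_of_mem _ ha)
  | zero => simp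
  | add a b _ _ ha hb => simpa [pow_add, Finset.prod_mul_distrib] using Subalgebra.mul_mem _ ha hb

variable {ℳ y} {μ : τ → ι} (hy : ∀ i, y i ∈ ℳ (μ i))
include hy

theorem prod_pow_mem_graded_sum (a : τ → ℕ) : ∏ i, y i ^ a i ∈ ℳ (∑ i, a i • μ i) :=
  SetLike.prod_pow_mem_graded ℳ μ y a fun i _ => hy i

theorem mem_span_monomials_of_mem_graded (htop : Algebra.adjoin R (range y) = ⊤) {d : ι}
    {x : A} (hx : x ∈ ℳ d) :
    x ∈ Submodule.span R
      ((fun a : τ → ℕ => ∏ i, y i ^ a i) '' {a : τ → ℕ | ∑ i, a i • μ i = d}) := by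
  have hspan : x ∈ Submodule.span R (range fun a : τ → ℕ => ∏ i, y i ^ a i) := by
    have hclosure :
        (Submonoid.closure (range y) : Set A) = range fun a : τ → ℕ => ∏ i, y i ^ a i := by
      ext z
      simp [Submonoid.mem_closure_range_iff_of_fintype, eq_comm]
    rw [← hclosure, ← Algebra.adjoin_eq_span, htop]
    trivial
  rw [← DirectSum.decompose_of_mem_same ℳ hx]
  clear hx
  induction hspan using Submodule.span_induction with
  | mem z hz =>
    obtain ⟨a, rfl⟩ := hz
    by_cases had : ∑ i, a i • μ i = d
    · rw [DirectSum.decompose_of_mem_same ℳ (had ▸ prod_pow_mem_graded_sum hy a)]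
      exact Submodule.subset_span ⟨a, had, rfl⟩
    · rw [DirectSum.decompose_of_mem_ne ℳ (prod_pow_mem_graded_sum hy a) had]
      exact zero_mem _
  | zero => simp
  | add z z' _ _ hz hz' => simpa using add_mem hz hz'
  | smul c z _ hz =>
    rw [DirectSum.decompose_smul, DirectSum.smul_apply, Submodule.coe_smul]
    exact Submodule.smul_mem _ c hz

theorem adjoin_iUnion_graded_eq_adjoin_monomials (htop : Algebra.adjoin R (range y) = ⊤)
    (Λ : Set ι) :
    Algebra.adjoin R (⋃ d ∈ Λ, (ℳ d : Set A)) =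
      Algebra.adjoin R
        ((fun a : τ → ℕ => ∏ i, y i ^ a i) '' {a : τ → ℕ | ∑ i, a i • μ i ∈ Λ}) := by
  refine le_antisymm (Algebra.adjoin_le ?_) (Algebra.adjoin_le ?_)
  · simp only [iUnion_subset_iff]
    intro d hd x hx
    refine Algebra.span_le_adjoin R _ (Submodule.span_mono (image_mono ?_)
      (mem_span_monomials_of_mem_graded hy htop hx))
    rintro a rfl
    exact hd
  · rintro _ ⟨a, ha, rfl⟩
    exact Algebra.subset_adjoin (mem_biUnion ha (prod_pow_mem_graded_sum hy a))

end Graded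

theorem inflating_fg_general (r : ℕ) (C : Set (Fin r → ℝ))
    (hC : ∃ (n : ℕ) (v : Fin n → Fin r → ℚ),
      C = { x | ∃ c : Fin n → ℝ, (∀ i, 0 ≤ c i) ∧
        x = ∑ i, c i • (fun j => (v i j : ℝ)) })
    (R' : Type) [CommRing R'] [Algebra ℂ R']
    (ℳ : (Fin r → ℤ) → Submodule ℂ R') [GradedRing ℳ]
    (hfg : (⊤ : Subalgebra ℂ R').FG) :
    (Algebra.adjoin ℂ (⋃ lam ∈ {lam : Fin r → ℤ |
      (fun j => ((lam j : ℝ))) ∈ C}, (ℳ lam : Set R'))).FG := by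
  classical
  obtain ⟨n, v, rfl⟩ := hC
  have hΛ : {lam : Fin r → ℤ | (fun j => (lam j : ℝ)) ∈
      {x | ∃ c : Fin n → ℝ, (∀ i, 0 ≤ c i) ∧ x = ∑ i, c i • fun j => (v i j : ℝ)}} =
      latticePoints (hull ℝ (range fun i j => (v i j : ℝ))) := by
    rw [← coe_hull_range]
    rfl
  obtain ⟨T, hT, hhom⟩ := exists_finset_homogeneous_adjoin_eq_top ℳ hfg
  choose μ hμ using hhom
  let L : (T → ℕ) →+ (Fin r → ℤ) :=
    (Fintype.linearCombination ℕ fun i : T => μ i i.2).toAddMonoidHom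
  obtain ⟨F, hF⟩ := (latticePoints_hull_rat_fg v).comap_of_wellQuasiOrderedLE L
  refine ⟨F.image fun a : T → ℕ => ∏ i : T, (i : R') ^ a i, ?_⟩
  rw [Finset.coe_image, ← adjoin_monomials_closure, hF, hΛ,
    adjoin_iUnion_graded_eq_adjoin_monomials (y := ((↑) : T → R')) (fun i => hμ i i.2)
      (by simpa using hT)]
  rfl

/-- **Inflating.** Let `C ⊆ C' ⊆ ℝ^r` be finite rational cones, and let `R'` be a
`ℂ`-algebra graded by `ℤ^r` with support in `Λ' = C' ∩ ℤ^r`. If `R'` is a finitely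
generated `ℂ`-algebra, then so is the subring `R = ⊕_{λ ∈ C ∩ ℤ^r} R'_λ`. -/
theorem inflating_fg (r : ℕ) (C C' : Set (Fin r → ℝ)) (hCC' : C ⊆ C')
    (hC : ∃ (n : ℕ) (v : Fin n → Fin r → ℚ),
      C = { x | ∃ c : Fin n → ℝ, (∀ i, 0 ≤ c i) ∧
        x = ∑ i, c i • (fun j => (v i j : ℝ)) })
    (hC' : ∃ (n : ℕ) (v : Fin n → Fin r → ℚ),
      C' = { x | ∃ c : Fin n → ℝ, (∀ i, 0 ≤ c i) ∧
        x = ∑ i, c i • (fun j => (v i j : ℝ)) })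
    (R' : Type) [CommRing R'] [Algebra ℂ R']
    (ℳ : (Fin r → ℤ) → Submodule ℂ R') [GradedRing ℳ]
    (hsupp : ∀ lam : Fin r → ℤ, (fun j => ((lam j : ℝ))) ∉ C' → ℳ lam = ⊥)
    (hfg : (⊤ : Subalgebra ℂ R').FG) :
    (Algebra.adjoin ℂ (⋃ lam ∈ {lam : Fin r → ℤ |
      (fun j => ((lam j : ℝ))) ∈ C}, (ℳ lam : Set R'))).FG :=
  inflating_fg_general r C hC R' ℳ hfg
end

section
/- Let C = ∪_{j=1}^r C_j ⊂ ℝ^r be a finite rational cone covered by finite rational subcones C_j, with C ⊆ ℝ_+^r. Then there exists N > 0 such that: if m = (m_1, …, m_r) ∈ C_j ∩ ℤ^r with Σ m_i > N, and C_j is generated over ℝ_+ by the back face of a parallelepiped in direction j (as in the main construction), then m − e_j ∈ C ∩ ℤ^r. -/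
/-!
Write a lattice point of the back-face cone `C_j` as `m = t • (v₀ + c)` with `c` in the box
`Π [bᵢ, 1]` and `c_j = 1`. Lowering `c_j` to `1 - 1/t` gives `m - e_j = t • (v₀ + c')`, and
`c'` stays in the box as long as `1/t ≤ 1 - b_j`. Since `∑ mᵢ ≤ t ∑ (|v₀ᵢ| + 1)`, a large
total degree forces a large scale `t`, which is all that is needed.
-/

open Finset

variable {ι : Type*}

def parallelepipedCone (v₀ b : ι → ℝ) : Set (ι → ℝ) :=
  {z | ∃ t : ℝ, 0 ≤ t ∧ ∃ c : ι → ℝ, (∀ i, b i ≤ c i ∧ c i ≤ 1) ∧ z = t • (v₀ + c)}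

def backFaceCone (v₀ b : ι → ℝ) (j : ι) : Set (ι → ℝ) :=
  {z | ∃ t : ℝ, 0 ≤ t ∧ ∃ c : ι → ℝ, (∀ i, b i ≤ c i ∧ c i ≤ 1) ∧ c j = 1 ∧
    z = t • (v₀ + c)}

lemma sum_smul_add_le [Fintype ι] {v₀ c : ι → ℝ} {t : ℝ} (ht : 0 ≤ t) (hc : ∀ i, c i ≤ 1) :
    ∑ i, (t • (v₀ + c)) i ≤ t * ∑ i, (|v₀ i| + 1) := by
  simp only [Pi.smul_apply, Pi.add_apply, smul_eq_mul, ← mul_sum]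
  exact mul_le_mul_of_nonneg_left
    (sum_le_sum fun i _ => add_le_add (le_abs_self _) (hc i)) ht

lemma lt_of_mul_sum_lt_sum_smul_add [Fintype ι] {v₀ c : ι → ℝ} {t a : ℝ} (ht : 0 ≤ t)
    (hc : ∀ i, c i ≤ 1) (h : a * ∑ i, (|v₀ i| + 1) < ∑ i, (t • (v₀ + c)) i) : a < t :=
  lt_of_mul_lt_mul_right (h.trans_le (sum_smul_add_le ht hc)) (by positivity)

lemma smul_add_sub_single_mem_parallelepipedCone [DecidableEq ι] {v₀ b c : ι → ℝ} {j : ι}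
    {t : ℝ} (ht : 0 < t) (hc : ∀ i, b i ≤ c i ∧ c i ≤ 1) (hcj : c j = 1)
    (htb : t⁻¹ ≤ 1 - b j) :
    t • (v₀ + c) - Pi.single j 1 ∈ parallelepipedCone v₀ b := by
  refine ⟨t, ht.le, c - Pi.single j t⁻¹, fun i => ?_, ?_⟩
  · rcases eq_or_ne i j with rfl | hij
    · have : 0 ≤ t⁻¹ := by positivity
      simp only [Pi.sub_apply, Pi.single_eq_same, hcj]
      constructor <;> linarith
    · simpa [Pi.single_eq_of_ne hij] using hc i
  · rw [← add_sub_assoc, smul_sub, ← Pi.single_smul, smul_eq_mul, mul_inv_cancel₀ ht.ne']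

lemma sub_single_mem_parallelepipedCone [Fintype ι] [DecidableEq ι] {v₀ b z : ι → ℝ} {j : ι}
    (hbj : b j < 1) (hz : z ∈ backFaceCone v₀ b j)
    (hsum : (1 - b j)⁻¹ * ∑ i, (|v₀ i| + 1) < ∑ i, z i) :
    z - Pi.single j 1 ∈ parallelepipedCone v₀ b := by
  obtain ⟨t, ht, c, hc, hcj, rfl⟩ := hz
  have hbj' : 0 < 1 - b j := sub_pos.mpr hbj
  have hlt : (1 - b j)⁻¹ < t := lt_of_mul_sum_lt_sum_smul_add ht (fun i => (hc i).2) hsum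
  exact smul_add_sub_single_mem_parallelepipedCone ((inv_pos.mpr hbj').trans hlt) hc hcj
    (inv_le_of_inv_le₀ hbj' hlt.le)

theorem total_degree_bound_general (r : ℕ) (v0 : Fin r → ℝ) (b : Fin r → ℝ)
    (hb : ∀ i, 0 ≤ b i ∧ b i < 1) :
    ∃ N : ℕ, ∀ j : Fin r, ∀ m : Fin r → ℤ,
      ((fun i => (m i : ℝ)) ∈ { z : Fin r → ℝ | ∃ t : ℝ, 0 ≤ t ∧
          ∃ c : Fin r → ℝ, (∀ i, b i ≤ c i ∧ c i ≤ 1) ∧ c j = 1 ∧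
            z = t • (v0 + c) }) →
      (N : ℤ) < ∑ i, m i →
      (fun i => (m i : ℝ)) - Pi.single j 1 ∈
        { z : Fin r → ℝ | ∃ t : ℝ, 0 ≤ t ∧ ∃ c : Fin r → ℝ,
          (∀ i, b i ≤ c i ∧ c i ≤ 1) ∧ z = t • (v0 + c) } := by
  set S : ℝ := ∑ i, (|v0 i| + 1)
  refine ⟨⌈(∑ i, (1 - b i)⁻¹) * S⌉₊, fun j m hm hdeg => ?_⟩
  have hinv : (1 - b j)⁻¹ ≤ ∑ i, (1 - b i)⁻¹ :=
    single_le_sum (f := fun i => (1 - b i)⁻¹)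
      (fun i _ => inv_nonneg.mpr (sub_nonneg.mpr (hb i).2.le)) (mem_univ j)
  refine sub_single_mem_parallelepipedCone (hb j).2 hm ?_
  calc (1 - b j)⁻¹ * S ≤ (∑ i, (1 - b i)⁻¹) * S := by gcongr
    _ ≤ ⌈(∑ i, (1 - b i)⁻¹) * S⌉₊ := Nat.le_ceil _
    _ < ∑ i, (m i : ℝ) := by exact_mod_cast hdeg

/-- In the main construction, there is a total-degree bound `N` such that for any
lattice point `m` of the cone `C_j` over the `j`-th back face with total degree
`> N`, the point `m − e_j` still lies in the cone `C` over the parallelepiped. -/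
theorem total_degree_bound (r : ℕ) (v0 : Fin r → ℝ) (b : Fin r → ℝ)
    (hv0 : ∀ i, 0 ≤ v0 i) (hb : ∀ i, 0 ≤ b i ∧ b i < 1) :
    ∃ N : ℕ, ∀ j : Fin r, ∀ m : Fin r → ℤ,
      ((fun i => (m i : ℝ)) ∈ { z : Fin r → ℝ | ∃ t : ℝ, 0 ≤ t ∧
          ∃ c : Fin r → ℝ, (∀ i, b i ≤ c i ∧ c i ≤ 1) ∧ c j = 1 ∧
            z = t • (v0 + c) }) →
      (N : ℤ) < ∑ i, m i →
      (fun i => (m i : ℝ)) - Pi.single j 1 ∈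
        { z : Fin r → ℝ | ∃ t : ℝ, 0 ≤ t ∧ ∃ c : Fin r → ℝ,
          (∀ i, b i ≤ c i ∧ c i ≤ 1) ∧ z = t • (v0 + c) } :=
  total_degree_bound_general r v0 b hb
end
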